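/- arXiv:2507.16501 — 3 statements merged into one kernel-verified Lean document; each statement's English description precedes it below -/
import Mathlib

section
/- Let (C_r)_{r∈ℕ} be a tower of cochain complexes of abelian groups, i.e. ℤ-indexed cochain complexes C_r together with chain maps C_{r+1} → C_r. Assume that for every integer n and every r ∈ ℕ there exists r' ≥ r such that the transition map H^n(C_{r'}) → H^n(C_r) is the zero map. Then for every integer n and every r ∈ ℕ there exists r'' ≥ r, independent of the prime, such that for every prime number p the induced map H^n(C_{r''}/p) → H^n(C_r/p) is the zero map. (Equivalently, the tower of complexes (∏_{p prime} C_r/p)_r has essentially zero cohomology.) -/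
set_option maxHeartbeats 1000000

open CategoryTheory CochainComplex HomologicalComplex

lemma homologyMap_eq_conj {K L : CochainComplex AddCommGrpCat ℤ} (g : K ⟶ L) (n : ℤ) :
    homologyMap g n =
      (HomotopyCategory.homologyFunctorFactors AddCommGrpCat (ComplexShape.up ℤ) n).inv.app K ≫
      (HomotopyCategory.homologyFunctor AddCommGrpCat (ComplexShape.up ℤ) n).map
        ((HomotopyCategory.quotient AddCommGrpCat (ComplexShape.up ℤ)).map g) ≫
      (HomotopyCategory.homologyFunctorFactors AddCommGrpCat (ComplexShape.up ℤ) n).hom.app L := by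
  have hnat := (HomotopyCategory.homologyFunctorFactors AddCommGrpCat (ComplexShape.up ℤ) n).hom.naturality g
  dsimp at hnat
  rw [hnat]
  erw [Iso.inv_hom_id_app_assoc]
  rfl

lemma homologyMap_eq_zero_iff' {K L : CochainComplex AddCommGrpCat ℤ} (g : K ⟶ L) (n : ℤ) :
    homologyMap g n = 0 ↔
      (HomotopyCategory.homologyFunctor AddCommGrpCat (ComplexShape.up ℤ) n).map
        ((HomotopyCategory.quotient AddCommGrpCat (ComplexShape.up ℤ)).map g) = 0 := by
  rw [homologyMap_eq_conj]
  constructor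
  · intro h0
    rw [← cancel_epi ((HomotopyCategory.homologyFunctorFactors AddCommGrpCat (ComplexShape.up ℤ) n).inv.app K),
      ← cancel_mono ((HomotopyCategory.homologyFunctorFactors AddCommGrpCat (ComplexShape.up ℤ) n).hom.app L)]
    erw [Category.assoc, h0]
    simp
    rfl
  · intro h0; rw [h0]; simp; rfl

/-- Given a tower `(C_r)_{r ∈ ℕ}` of cochain complexes of abelian groups
(encoded as a functor `ℕᵒᵖ ⥤ CochainComplex AddCommGrp ℤ`) whose cohomology tower
`(H^n(C_r))_r` is essentially zero for every `n`, the tower of mod-`p` reductions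
(mapping cones of `p • 𝟙`) has essentially zero cohomology, uniformly in the prime `p`. -/
theorem statement0 (C : ℕᵒᵖ ⥤ CochainComplex AddCommGrpCat ℤ)
    (h : ∀ (n : ℤ) (r : ℕ), ∃ r', ∃ hle : r ≤ r',
      homologyMap (C.map (homOfLE hle).op) n = 0) :
    ∀ (n : ℤ) (r : ℕ), ∃ r'', ∃ hle : r ≤ r'', ∀ p : ℕ, p.Prime →
      homologyMap
        (mappingCone.map ((p : ℤ) • 𝟙 (C.obj (Opposite.op r'')))
          ((p : ℤ) • 𝟙 (C.obj (Opposite.op r)))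
          (C.map (homOfLE hle).op) (C.map (homOfLE hle).op)
          (by simp)) n = 0 := by
  intro n r
  obtain ⟨r₁, hle₁, h1⟩ := h n r
  obtain ⟨r₂, hle₂, h2⟩ := h (n + 1) r₁
  refine ⟨r₂, hle₁.trans hle₂, fun p hp => ?_⟩
  set g₂ : C.obj (Opposite.op r₂) ⟶ C.obj (Opposite.op r₁) := C.map (homOfLE hle₂).op with hg₂
  set g₁ : C.obj (Opposite.op r₁) ⟶ C.obj (Opposite.op r) := C.map (homOfLE hle₁).op with hg₁
  set φ₂ := (p : ℤ) • 𝟙 (C.obj (Opposite.op r₂)) with hφ₂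
  set φ₁ := (p : ℤ) • 𝟙 (C.obj (Opposite.op r₁)) with hφ₁
  set φ₀ := (p : ℤ) • 𝟙 (C.obj (Opposite.op r)) with hφ₀
  have hg : C.map (homOfLE (hle₁.trans hle₂)).op = g₂ ≫ g₁ := by
    rw [hg₂, hg₁, ← C.map_comp]; rfl
  have comm₂ : φ₂ ≫ g₂ = g₂ ≫ φ₁ := by simp [hφ₂, hφ₁]
  have comm₁ : φ₁ ≫ g₁ = g₁ ≫ φ₀ := by simp [hφ₁, hφ₀]
  have hcone : mappingCone.map φ₂ φ₀ (C.map (homOfLE (hle₁.trans hle₂)).op)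
      (C.map (homOfLE (hle₁.trans hle₂)).op) (by simp [hφ₂, hφ₀]) =
      mappingCone.map φ₂ φ₁ g₂ g₂ comm₂ ≫ mappingCone.map φ₁ φ₀ g₁ g₁ comm₁ := by
    rw [← mappingCone.map_comp φ₂ φ₁ φ₀ g₂ g₂ comm₂ g₁ g₁ comm₁]
    congr 1 <;> rw [hg]
  set Q := HomotopyCategory.quotient AddCommGrpCat (ComplexShape.up ℤ) with hQ
  set F := HomotopyCategory.homologyFunctor AddCommGrpCat (ComplexShape.up ℤ) 0 with hF
  have hT₁ := HomotopyCategory.mappingCone_triangleh_distinguished φ₁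
  set ψ : mappingCone.triangleh φ₂ ⟶ mappingCone.triangleh φ₁ :=
    mappingCone.trianglehMapOfHomotopy (Homotopy.ofEq comm₂) with hψ
  set ψ' : mappingCone.triangleh φ₁ ⟶ mappingCone.triangleh φ₀ :=
    mappingCone.trianglehMapOfHomotopy (Homotopy.ofEq comm₁) with hψ'
  have hψ₃ : ψ.hom₃ = Q.map (mappingCone.map φ₂ φ₁ g₂ g₂ comm₂) := by
    rw [hψ]; rw [mappingCone.map_eq_mapOfHomotopy]; rfl
  have hψ'₃ : ψ'.hom₃ = Q.map (mappingCone.map φ₁ φ₀ g₁ g₁ comm₁) := by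
    rw [hψ']; rw [mappingCone.map_eq_mapOfHomotopy]; rfl
  have hψ₁ : ψ.hom₁ = Q.map g₂ := rfl
  have hψ'₂ : ψ'.hom₂ = Q.map g₁ := rfl
  -- the transition on H^{n+1} vanishes
  have hg₂zero : (F.shift (n + 1)).map ψ.hom₁ = 0 :=
    (homologyMap_eq_zero_iff' _ _).1 h2
  -- the transition on H^n vanishes
  have hg₁zero : (F.shift n).map ψ'.hom₂ = 0 :=
    (homologyMap_eq_zero_iff' _ _).1 h1
  have hδzero : (F.shift n).map ψ.hom₃ ≫
      F.homologySequenceδ (mappingCone.triangleh φ₁) n (n + 1) rfl = 0 := by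
    rw [F.homologySequenceδ_naturality (mappingCone.triangleh φ₂) (mappingCone.triangleh φ₁)
      ψ n (n + 1) rfl, hg₂zero, Limits.comp_zero]
  have hex := F.homologySequence_exact₃ (mappingCone.triangleh φ₁) hT₁ n (n + 1) rfl
  rw [ShortComplex.ab_exact_iff] at hex
  have hzero : (F.shift n).map ψ.hom₃ ≫ (F.shift n).map ψ'.hom₃ = 0 := by
    ext x
    obtain ⟨z, hz⟩ := hex (((F.shift n).map ψ.hom₃) x)
      (by simpa using congrArg (fun f => f x) hδzero)
    calc ((F.shift n).map ψ.hom₃ ≫ (F.shift n).map ψ'.hom₃) x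
        = (F.shift n).map ψ'.hom₃ ((F.shift n).map ψ.hom₃ x) := rfl
      _ = (F.shift n).map ψ'.hom₃
          ((F.shift n).map (mappingCone.triangleh φ₁).mor₂ z) := by rw [hz]
      _ = ((F.shift n).map ((mappingCone.triangleh φ₁).mor₂ ≫ ψ'.hom₃)) z := by
          rw [Functor.map_comp]; rfl
      _ = ((F.shift n).map (ψ'.hom₂ ≫ (mappingCone.triangleh φ₀).mor₂)) z := by
          rw [ψ'.comm₂]
      _ = ((F.shift n).map ψ'.hom₂ ≫ (F.shift n).map (mappingCone.triangleh φ₀).mor₂) z := by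
          rw [← Functor.map_comp]
      _ = 0 := by
          rw [hg₁zero, Limits.zero_comp]
          rfl
  have hzero' : (HomotopyCategory.homologyFunctor AddCommGrpCat (ComplexShape.up ℤ) n).map
      ((HomotopyCategory.quotient AddCommGrpCat (ComplexShape.up ℤ)).map
        (mappingCone.map φ₂ φ₁ g₂ g₂ comm₂)) ≫
      (HomotopyCategory.homologyFunctor AddCommGrpCat (ComplexShape.up ℤ) n).map
      ((HomotopyCategory.quotient AddCommGrpCat (ComplexShape.up ℤ)).map
        (mappingCone.map φ₁ φ₀ g₁ g₁ comm₁)) = 0 := by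
    rw [hψ₃, hψ'₃] at hzero
    exact hzero
  rw [hcone, homologyMap_comp, homologyMap_eq_conj, homologyMap_eq_conj]
  erw [Category.assoc, Category.assoc, Iso.hom_inv_id_app_assoc]
  erw [reassoc_of% hzero']
  erw [Limits.zero_comp, Limits.comp_zero]
end

section
/- Let (A_r)_{r∈ℕ} be a tower of abelian groups satisfying the following three conditions: (1) for every r ∈ ℕ there exists r' ≥ r such that the image of the transition map A_{r'} → A_r is a torsion group; (2) for every prime number p and every r ∈ ℕ there exists r' ≥ r such that the image of the transition map A_{r'} → A_r is contained in p·A_r; (3) for all r ≤ r', if the image of the transition map A_{r'} → A_r is a torsion group, then there exists an integer N ≥ 1 annihilating this image. Then the tower (A_r)_r is pro-zero, i.e. for every r ∈ ℕ there exists r'' ≥ r such that the transition map A_{r''} → A_r is the zero map. -/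
open CategoryTheory

/-- Divisibility of transition images by arbitrary `N ≥ 1`, by induction on `N` using
condition (2) for each prime factor. -/
lemma statement5_div (A : ℕᵒᵖ ⥤ AddCommGrpCat)
    (h2 : ∀ p : ℕ, p.Prime → ∀ r : ℕ, ∃ r', ∃ hle : r ≤ r',
      ∀ x : A.obj (Opposite.op r'), ∃ y : A.obj (Opposite.op r),
        A.map (homOfLE hle).op x = p • y) :
    ∀ N : ℕ, 1 ≤ N → ∀ r : ℕ, ∃ r', ∃ hle : r ≤ r',
      ∀ x : A.obj (Opposite.op r'), ∃ y : A.obj (Opposite.op r),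
        A.map (homOfLE hle).op x = N • y := by
  intro N
  induction N using Nat.strong_induction_on with
  | _ N ih =>
    intro hN r
    rcases eq_or_lt_of_le hN with h1 | h1
    · refine ⟨r, le_refl r, fun x => ⟨A.map (homOfLE (le_refl r)).op x, ?_⟩⟩
      rw [← h1, one_smul]
    · -- N ≥ 2
      set p := N.minFac with hp
      have hpp : p.Prime := Nat.minFac_prime (by omega)
      have hpdvd : p ∣ N := Nat.minFac_dvd N
      set m := N / p with hm
      have hmN : m * p = N := Nat.div_mul_cancel hpdvd
      have hm1 : 1 ≤ m := Nat.div_pos (Nat.minFac_le (by omega)) hpp.pos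
      have hmlt : m < N := by
        have : 2 ≤ p := hpp.two_le
        nlinarith
      obtain ⟨r1, hle1, hf⟩ := h2 p hpp r
      obtain ⟨r2, hle2, hg⟩ := ih m hmlt hm1 r1
      refine ⟨r2, le_trans hle1 hle2, fun x => ?_⟩
      obtain ⟨y, hy⟩ := hg x
      obtain ⟨z, hz⟩ := hf y
      refine ⟨z, ?_⟩
      have hcomp : A.map (homOfLE (le_trans hle1 hle2)).op x
          = A.map (homOfLE hle1).op (A.map (homOfLE hle2).op x) := by
        rw [← CategoryTheory.comp_apply, ← A.map_comp]
        rfl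
      rw [hcomp, hy, map_nsmul, hz, smul_smul, hmN]

/-- Let `(A_r)_{r ∈ ℕ}` be a tower of abelian groups (encoded as a functor
`ℕᵒᵖ ⥤ AddCommGrp`) such that: (1) for every `r` there is `r' ≥ r` with torsion image of the
transition map `A_{r'} → A_r`; (2) for every prime `p` and every `r` there is `r' ≥ r` with
image of the transition map contained in `p·A_r`; (3) whenever the image of a transition map
`A_{r'} → A_r` is torsion, it is annihilated by some integer `N ≥ 1`.  Then the tower
`(A_r)_r` is pro-zero. -/
theorem statement5 (A : ℕᵒᵖ ⥤ AddCommGrpCat)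
    (h1 : ∀ r : ℕ, ∃ r', ∃ hle : r ≤ r',
      ∀ x : A.obj (Opposite.op r'), IsOfFinAddOrder (A.map (homOfLE hle).op x))
    (h2 : ∀ p : ℕ, p.Prime → ∀ r : ℕ, ∃ r', ∃ hle : r ≤ r',
      ∀ x : A.obj (Opposite.op r'), ∃ y : A.obj (Opposite.op r),
        A.map (homOfLE hle).op x = p • y)
    (h3 : ∀ (r r' : ℕ) (hle : r ≤ r'),
      (∀ x : A.obj (Opposite.op r'), IsOfFinAddOrder (A.map (homOfLE hle).op x)) →
      ∃ N : ℕ, 1 ≤ N ∧ ∀ x : A.obj (Opposite.op r'), N • A.map (homOfLE hle).op x = 0) :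
    ∀ r : ℕ, ∃ r'', ∃ hle : r ≤ r'', A.map (homOfLE hle).op = 0 := by
  intro r
  obtain ⟨r', hle', htor⟩ := h1 r
  obtain ⟨N, hN1, hNann⟩ := h3 r r' hle' htor
  obtain ⟨r'', hle'', hdiv⟩ := statement5_div A h2 N hN1 r'
  refine ⟨r'', le_trans hle' hle'', ?_⟩
  ext x
  obtain ⟨y, hy⟩ := hdiv x
  have hcomp : A.map (homOfLE (le_trans hle' hle'')).op x
      = A.map (homOfLE hle').op (A.map (homOfLE hle'').op x) := by
    rw [← CategoryTheory.comp_apply, ← A.map_comp]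
    rfl
  have : A.map (homOfLE (le_trans hle' hle'')).op x = N • A.map (homOfLE hle').op y := by
    rw [hcomp, hy, map_nsmul]
  rw [this, hNann y]
  rfl
end

section
/- Let A be a noetherian commutative ring, I ⊆ A an ideal, and B a commutative A-algebra, with structure homomorphism f : A → B, which is finitely generated as an A-module. Assume there exists an integer m ≥ 0 such that I^m annihilates the kernel of f and such that I^m·B is contained in the image of f (i.e. I^m annihilates the cokernel of f as an A-module). Then: (i) there exists r₀ ≥ 0 such that I^r ∩ ker(f) = 0 for all r ≥ r₀; and (ii) for all integers r ≥ 0 and r' ≥ r + m, the ideal of B generated by f(I^{r'}) is contained in the image f(I^r) of I^r under f. In particular, the natural map of towers of A-modules {I^r}_{r∈ℕ} → {I^r·B}_{r∈ℕ} (where I^r·B denotes the ideal of B generated by f(I^r)) has pro-zero kernels and pro-zero cokernels, i.e. it is an isomorphism of pro A-modules. -/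
set_option maxHeartbeats 400000 in
/-- Let `A` be a noetherian commutative ring, `I ⊆ A` an ideal, and `B` a
commutative `A`-algebra which is finitely generated as an `A`-module, with structure map
`f = algebraMap A B`.  Assume some power `I^m` annihilates `ker f` and satisfies
`I^m·B ⊆ f(A)`.  Then: (i) `I^r ∩ ker f = 0` for all large `r`; and (ii) for all `r` and all
`r' ≥ r + m`, the ideal of `B` generated by `f(I^{r'})` is contained in the set `f(I^r)`.
In particular the map of towers `{I^r}_r → {I^r·B}_r` has pro-zero kernels and cokernels. -/
theorem statement6 (A : Type*) [CommRing A] [IsNoetherianRing A] (I : Ideal A)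
    (B : Type*) [CommRing B] [Algebra A B] [Module.Finite A B]
    (m : ℕ)
    (hker : ∀ a ∈ I ^ m, ∀ x ∈ RingHom.ker (algebraMap A B), a * x = 0)
    (hcoker : (Ideal.map (algebraMap A B) (I ^ m) : Set B) ⊆ Set.range (algebraMap A B)) :
    (∃ r₀ : ℕ, ∀ r : ℕ, r₀ ≤ r → I ^ r ⊓ RingHom.ker (algebraMap A B) = ⊥) ∧
    (∀ r r' : ℕ, r + m ≤ r' →
      (Ideal.map (algebraMap A B) (I ^ r') : Set B) ⊆ (algebraMap A B) '' (I ^ r : Ideal A)) := by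
  constructor
  · -- part (i): Artin–Rees
    obtain ⟨k, hk⟩ := Ideal.exists_pow_inf_eq_pow_smul I
      (RingHom.ker (algebraMap A B) : Ideal A)
    refine ⟨k + m, fun r hr => ?_⟩
    have h1 : I ^ r ⊓ RingHom.ker (algebraMap A B)
        = I ^ (r - k) • (I ^ k • ⊤ ⊓ (RingHom.ker (algebraMap A B) : Ideal A)) := by
      have := hk r (le_trans (Nat.le_add_right k m) hr)
      rwa [smul_eq_mul, Ideal.mul_top] at this
    rw [h1, smul_eq_mul, eq_bot_iff]
    have h2 : I ^ (r - k) * (I ^ k • ⊤ ⊓ (RingHom.ker (algebraMap A B) : Ideal A))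
        ≤ I ^ m * (RingHom.ker (algebraMap A B) : Ideal A) :=
      Ideal.mul_mono (Ideal.pow_le_pow_right (by omega)) inf_le_right
    refine h2.trans ?_
    rw [Ideal.mul_le]
    intro a ha x hx
    rw [Ideal.mem_bot]
    exact hker a ha x hx
  · -- part (ii)
    intro r r' hr' b hb
    -- work with A-submodules of B
    have key : (Ideal.map (algebraMap A B) (I ^ r')).restrictScalars A
        ≤ Submodule.map (Algebra.linearMap A B) (I ^ r) := by
      rw [← Ideal.smul_top_eq_map]
      have h1 : (I ^ r' : Ideal A) ≤ I ^ r * I ^ m := by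
        rw [← pow_add]; exact Ideal.pow_le_pow_right hr'
      have h2 : (I ^ r' : Ideal A) • (⊤ : Submodule A B)
          ≤ (I ^ r * I ^ m) • (⊤ : Submodule A B) :=
        Submodule.smul_mono h1 le_rfl
      refine h2.trans ?_
      rw [mul_smul]
      have h3 : (I ^ m : Ideal A) • (⊤ : Submodule A B)
          ≤ LinearMap.range (Algebra.linearMap A B) := by
        rw [Ideal.smul_top_eq_map]
        intro x hx
        obtain ⟨a, ha⟩ := hcoker hx
        exact ⟨a, ha⟩
      have h4 : (I ^ r : Ideal A) • ((I ^ m : Ideal A) • (⊤ : Submodule A B))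
          ≤ (I ^ r : Ideal A) • LinearMap.range (Algebra.linearMap A B) :=
        Submodule.smul_mono le_rfl h3
      refine h4.trans ?_
      rw [← Submodule.map_top, ← Submodule.map_smul'']
      refine Submodule.map_mono ?_
      rw [smul_eq_mul, Ideal.mul_top]
    obtain ⟨a, ha, rfl⟩ := key hb
    exact ⟨a, ha, rfl⟩
end
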